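/- arXiv:2512.13467 — 5 statements merged into one kernel-verified Lean document; each statement's English description precedes it below -/
import Mathlib

section
/- Let τ and τ' be ℕ-valued random variables (hitting times under two policies π and π'). Set t = min{n : P(τ = n) > 0} and t' = min{n : P(τ' = n) > 0}, and assume t < t'. Let p = P(τ = t) > 0. If 0 < λ ≤ p^{1/(t'−t)}, then E[λ^τ]/(1-λ) ≥ E[λ^{τ'}]/(1-λ), i.e., the value function of π dominates that of π' at this initial state. -/
open MeasureTheory

/-!
With `0 < λ < 1`, `λ ^ n` is decreasing in `n`. Since `τ' ≥ t'` almost surely,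
`E[λ^τ'] ≤ λ^t'`, while keeping only the event `{τ = t}` gives `E[λ^τ] ≥ p λ^t`.
The bound `λ ≤ p^{1/(t'-t)}` says exactly `λ^(t'-t) ≤ p`, so `λ^t' ≤ p λ^t`.
-/

section HittingTime

variable {Ω : Type*} [MeasurableSpace Ω] {μ : Measure Ω} {τ : Ω → ℕ} {lam : ℝ}

lemma ae_le_of_measure_eq_zero_of_lt {t : ℕ} (h : ∀ n : ℕ, n < t → μ {ω | τ ω = n} = 0) :
    ∀ᵐ ω ∂μ, t ≤ τ ω := by
  have hnull : μ (⋃ n : Fin t, {ω | τ ω = n}) = 0 := measure_iUnion_null fun n => h n n.2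
  refine measure_mono_null (fun ω hω => ?_) hnull
  exact Set.mem_iUnion.mpr ⟨⟨τ ω, not_le.mp hω⟩, rfl⟩

lemma integrable_pow_comp [IsFiniteMeasure μ] (hτ : Measurable τ) (h0 : 0 ≤ lam)
    (h1 : lam ≤ 1) : Integrable (fun ω => lam ^ τ ω) μ := by
  refine Integrable.of_bound (measurable_const.pow hτ).aestronglyMeasurable 1 ?_
  filter_upwards with ω
  rw [Real.norm_of_nonneg (pow_nonneg h0 _)]
  exact pow_le_one₀ h0 h1

lemma integral_pow_comp_le_pow [IsProbabilityMeasure μ] {t : ℕ} (hτ : Measurable τ)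
    (h0 : 0 ≤ lam) (h1 : lam ≤ 1) (ht : ∀ᵐ ω ∂μ, t ≤ τ ω) :
    ∫ ω, lam ^ τ ω ∂μ ≤ lam ^ t := by
  calc ∫ ω, lam ^ τ ω ∂μ ≤ ∫ _, lam ^ t ∂μ := by
        refine integral_mono_ae (integrable_pow_comp hτ h0 h1) (integrable_const _) ?_
        filter_upwards [ht] with ω hω
        exact pow_le_pow_of_le_one h0 h1 hω
    _ = lam ^ t := by simp

lemma measureReal_mul_pow_le_integral_pow_comp [IsFiniteMeasure μ] (t : ℕ)
    (hτ : Measurable τ) (h0 : 0 ≤ lam) (h1 : lam ≤ 1) :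
    μ.real {ω | τ ω = t} * lam ^ t ≤ ∫ ω, lam ^ τ ω ∂μ := by
  have hs : MeasurableSet {ω | τ ω = t} := hτ (measurableSet_singleton t)
  calc μ.real {ω | τ ω = t} * lam ^ t = ∫ ω in {ω | τ ω = t}, lam ^ τ ω ∂μ := by
        rw [setIntegral_congr_fun hs fun ω (hω : τ ω = t) => by rw [hω], setIntegral_const,
          smul_eq_mul]
    _ ≤ ∫ ω, lam ^ τ ω ∂μ :=
        setIntegral_le_integral (integrable_pow_comp hτ h0 h1)
          (Filter.Eventually.of_forall fun ω => pow_nonneg h0 _)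

end HittingTime

lemma pow_sub_le_of_le_rpow {lam p : ℝ} {t t' : ℕ} (htt' : t < t') (h0 : 0 ≤ lam) (hp : 0 ≤ p)
    (h : lam ≤ p ^ ((1 : ℝ) / ((t' : ℝ) - (t : ℝ)))) : lam ^ (t' - t) ≤ p := by
  have hd : ((t' - t : ℕ) : ℝ) = (t' : ℝ) - t := Nat.cast_sub htt'.le
  have hdpos : (0 : ℝ) < (t' - t : ℕ) := by exact_mod_cast Nat.sub_pos_of_lt htt'
  rw [one_div, ← hd, Real.le_rpow_inv_iff_of_pos h0 hp hdpos, Real.rpow_natCast] at h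
  exact h

theorem small_discount_prefers_short_path_general
    {Ω : Type*} [MeasurableSpace Ω] (μ : Measure Ω) [IsProbabilityMeasure μ]
    (τ τ' : Ω → ℕ) (hτ : Measurable τ) (hτ' : Measurable τ')
    (t t' : ℕ) (htt' : t < t')
    (hτ'min : ∀ n : ℕ, n < t' → μ {ω | τ' ω = n} = 0)
    (p : ℝ) (hp : p = (μ {ω | τ ω = t}).toReal)
    (lam : ℝ) (hlam0 : 0 < lam) (hlam1 : lam < 1)
    (hlam : lam ≤ p ^ ((1 : ℝ) / ((t' : ℝ) - (t : ℝ)))) :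
    (∫ ω, lam ^ (τ' ω) ∂μ) / (1 - lam) ≤ (∫ ω, lam ^ (τ ω) ∂μ) / (1 - lam) := by
  refine div_le_div_of_nonneg_right ?_ (sub_pos.mpr hlam1).le
  have hp0 : 0 ≤ p := hp ▸ ENNReal.toReal_nonneg
  calc ∫ ω, lam ^ τ' ω ∂μ ≤ lam ^ t' :=
        integral_pow_comp_le_pow hτ' hlam0.le hlam1.le (ae_le_of_measure_eq_zero_of_lt hτ'min)
    _ = lam ^ t * lam ^ (t' - t) := by rw [← pow_add, Nat.add_sub_cancel' htt'.le]
    _ ≤ lam ^ t * p :=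
        mul_le_mul_of_nonneg_left (pow_sub_le_of_le_rpow htt' hlam0.le hp0 hlam) (by positivity)
    _ = μ.real {ω | τ ω = t} * lam ^ t := by rw [hp, mul_comm]; rfl
    _ ≤ ∫ ω, lam ^ τ ω ∂μ :=
        measureReal_mul_pow_le_integral_pow_comp t hτ hlam0.le hlam1.le

/-- Theorem 3.2 of the paper: if the minimal support point `t` of `τ` is strictly
smaller than the minimal support point `t'` of `τ'`, `p = P(τ = t) > 0`, and
`0 < λ ≤ p^{1/(t'-t)}`, then `E[λ^τ]/(1-λ) ≥ E[λ^{τ'}]/(1-λ)`. -/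
theorem small_discount_prefers_short_path
    {Ω : Type*} [MeasurableSpace Ω] (μ : Measure Ω) [IsProbabilityMeasure μ]
    (τ τ' : Ω → ℕ) (hτ : Measurable τ) (hτ' : Measurable τ')
    (t t' : ℕ) (htt' : t < t')
    (hτmin : ∀ n : ℕ, n < t → μ {ω | τ ω = n} = 0)
    (hτ'min : ∀ n : ℕ, n < t' → μ {ω | τ' ω = n} = 0)
    (p : ℝ) (hp : p = (μ {ω | τ ω = t}).toReal) (hppos : 0 < p)
    (lam : ℝ) (hlam0 : 0 < lam) (hlam1 : lam < 1)
    (hlam : lam ≤ p ^ ((1 : ℝ) / ((t' : ℝ) - (t : ℝ)))) :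
    (∫ ω, lam ^ (τ' ω) ∂μ) / (1 - lam) ≤ (∫ ω, lam ^ (τ ω) ∂μ) / (1 - lam) :=
  small_discount_prefers_short_path_general μ τ τ' hτ hτ' t t' htt' hτ'min p hp lam hlam0 hlam1 hlam
end

section
/- Define sequences (value functions) by the recursions v(0,0) = 1/(1-λ), v(2,0) = 3λ/((1-λ)(4-λ)), v(3,0) = 3λ(19+3λ)/(2(4-λ)(1-λ)(18-7λ)), v(2,2) = 9λ²/((1-λ)(4-λ)²), and v(3,2) = 9λ²(19+3λ)/(2(18-7λ)(1-λ)(4-λ)²), for λ ∈ (0,1). Then 20·v(3,2) + 31·v(2,2) + 57·v(0,2) − 108·v(3,0) = 0, where v(0,2) = v(2,0) by symmetry. -/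
namespace DistOnePolicy

variable {K : Type*} [Field K]

def v20 (x : K) : K := 3 * x / ((1 - x) * (4 - x))

def v30 (x : K) : K := 3 * x * (19 + 3 * x) / (2 * (4 - x) * (1 - x) * (18 - 7 * x))

def v22 (x : K) : K := 9 * x ^ 2 / ((1 - x) * (4 - x) ^ 2)

def v32 (x : K) : K := 9 * x ^ 2 * (19 + 3 * x) / (2 * (18 - 7 * x) * (1 - x) * (4 - x) ^ 2)

/-- The factor `18 - 7x` cancels, since `10x - 18(4 - x) = -4(18 - 7x)`. -/
theorem twenty_v32_sub_v30 [CharZero K] (x : K) (ha : 1 - x ≠ 0) (hb : 4 - x ≠ 0)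
    (hc : 18 - 7 * x ≠ 0) :
    20 * v32 x - 108 * v30 x = -(36 * x * (19 + 3 * x) / ((1 - x) * (4 - x) ^ 2)) := by
  rw [v32, v30, mul_div_assoc', mul_div_assoc', div_sub_div _ _ (by simp [*]) (by simp [*]),
    neg_div', div_eq_div_iff (by simp [*]) (by simp [*])]
  ring

theorem thirtyone_v22_add_v20 (x : K) (ha : 1 - x ≠ 0) (hb : 4 - x ≠ 0) :
    31 * v22 x + 57 * v20 x = 36 * x * (19 + 3 * x) / ((1 - x) * (4 - x) ^ 2) := by
  rw [v22, v20]
  field_simp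
  ring

end DistOnePolicy

theorem bellman_indifference_eq1_1_general
    (lam : ℝ) (h1 : lam < 1)
    (v20 v30 v22 v32 : ℝ)
    (h20 : v20 = 3 * lam / ((1 - lam) * (4 - lam)))
    (h30 : v30 = 3 * lam * (19 + 3 * lam) / (2 * (4 - lam) * (1 - lam) * (18 - 7 * lam)))
    (h22 : v22 = 9 * lam ^ 2 / ((1 - lam) * (4 - lam) ^ 2))
    (h32 : v32 = 9 * lam ^ 2 * (19 + 3 * lam) / (2 * (18 - 7 * lam) * (1 - lam) * (4 - lam) ^ 2)) :
    20 * v32 + 31 * v22 + 57 * v20 - 108 * v30 = 0 := by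
  have ha : 1 - lam ≠ 0 := by linarith
  have hb : 4 - lam ≠ 0 := by linarith
  have hc : 18 - 7 * lam ≠ 0 := by linarith
  obtain rfl : v20 = DistOnePolicy.v20 lam := h20
  obtain rfl : v30 = DistOnePolicy.v30 lam := h30
  obtain rfl : v22 = DistOnePolicy.v22 lam := h22
  obtain rfl : v32 = DistOnePolicy.v32 lam := h32
  linear_combination DistOnePolicy.twenty_v32_sub_v30 lam ha hb hc +
    DistOnePolicy.thirtyone_v22_add_v20 lam ha hb

/-- Bellman indifference identity (eq1_1) at state (3,2) for the explicit value
functions of the distance-1 policy of the auxiliary two-stripe MDP: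
`20 v(3,2) + 31 v(2,2) + 57 v(0,2) - 108 v(3,0) = 0`, with `v(0,2) = v(2,0)`. -/
theorem bellman_indifference_eq1_1
    (lam : ℝ) (h0 : 0 < lam) (h1 : lam < 1)
    (v00 v20 v30 v22 v32 : ℝ)
    (h00 : v00 = 1 / (1 - lam))
    (h20 : v20 = 3 * lam / ((1 - lam) * (4 - lam)))
    (h30 : v30 = 3 * lam * (19 + 3 * lam) / (2 * (4 - lam) * (1 - lam) * (18 - 7 * lam)))
    (h22 : v22 = 9 * lam ^ 2 / ((1 - lam) * (4 - lam) ^ 2))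
    (h32 : v32 = 9 * lam ^ 2 * (19 + 3 * lam) / (2 * (18 - 7 * lam) * (1 - lam) * (4 - lam) ^ 2)) :
    20 * v32 + 31 * v22 + 57 * v20 - 108 * v30 = 0 :=
  bellman_indifference_eq1_1_general lam h1 v20 v30 v22 v32 h20 h30 h22 h32
end

section
/- For λ ∈ (0,1), let v(2,2) = 9λ²/((1-λ)(4-λ)²), v(3,2) = 9λ²(19+3λ)/(2(18-7λ)(1-λ)(4-λ)²), v(2,0) = 3λ/((1-λ)(4-λ)), and v(3,0) = 3λ(19+3λ)/(2(4-λ)(1-λ)(18-7λ)). Then 8·v(3,2) − 65·v(2,2) + 57·v(0,2) > 0 where v(0,2) = v(2,0), for all λ ∈ (0,1). -/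
/-! Over the common denominator `2 (18 - 7λ) (1 - λ) (4 - λ)²` the numerator of the combination
factors as `432 λ (1 - λ) (57 - 25λ)`, so the pole at `λ = 1` cancels and the combination is
`216 λ (57 - 25λ) / ((18 - 7λ) (4 - λ)²)`, positive on all of `(0, 57/25)`. -/

namespace BellmanIneq

lemma combination_eq (lam : ℝ) (h1 : lam ≠ 1) (h4 : lam ≠ 4) (h18 : 18 - 7 * lam ≠ 0) :
    8 * (9 * lam ^ 2 * (19 + 3 * lam) / (2 * (18 - 7 * lam) * (1 - lam) * (4 - lam) ^ 2))
      - 65 * (9 * lam ^ 2 / ((1 - lam) * (4 - lam) ^ 2))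
      + 57 * (3 * lam / ((1 - lam) * (4 - lam)))
      = 216 * lam * (57 - 25 * lam) / ((18 - 7 * lam) * (4 - lam) ^ 2) := by
  have h1' : 1 - lam ≠ 0 := sub_ne_zero.mpr (Ne.symm h1)
  have h4' : 4 - lam ≠ 0 := sub_ne_zero.mpr (Ne.symm h4)
  -- `field_simp` looks for the denominator in its normal form `18 - lam * 7`
  have h18' : 18 - lam * 7 ≠ 0 := by rwa [mul_comm] at h18
  field_simp
  ring

lemma combination_closedForm_pos {lam : ℝ} (h0 : 0 < lam) (hlt : lam < 57 / 25) :
    0 < 216 * lam * (57 - 25 * lam) / ((18 - 7 * lam) * (4 - lam) ^ 2) := by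
  have h57 : 0 < 57 - 25 * lam := by linarith
  have h18 : 0 < 18 - 7 * lam := by linarith
  have h4 : 0 < 4 - lam := by linarith
  positivity

end BellmanIneq

open BellmanIneq in
theorem bellman_strict_ineq1_1_general
    (lam : ℝ) (h0 : 0 < lam) (h1 : lam < 1)
    (v20 v22 v32 : ℝ)
    (h20 : v20 = 3 * lam / ((1 - lam) * (4 - lam)))
    (h22 : v22 = 9 * lam ^ 2 / ((1 - lam) * (4 - lam) ^ 2))
    (h32 : v32 = 9 * lam ^ 2 * (19 + 3 * lam) / (2 * (18 - 7 * lam) * (1 - lam) * (4 - lam) ^ 2)) :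
    8 * v32 - 65 * v22 + 57 * v20 > 0 := by
  subst h20 h22 h32
  rw [gt_iff_lt, combination_eq lam h1.ne (by linarith) (by linarith)]
  exact combination_closedForm_pos h0 (by linarith)

/-- Strict Bellman inequality (ineq1_1 with j = 2):
`8 v(3,2) - 65 v(2,2) + 57 v(0,2) > 0` with `v(0,2) = v(2,0)`, for all `λ ∈ (0,1)`. -/
theorem bellman_strict_ineq1_1
    (lam : ℝ) (h0 : 0 < lam) (h1 : lam < 1)
    (v20 v30 v22 v32 : ℝ)
    (h20 : v20 = 3 * lam / ((1 - lam) * (4 - lam)))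
    (h30 : v30 = 3 * lam * (19 + 3 * lam) / (2 * (4 - lam) * (1 - lam) * (18 - 7 * lam)))
    (h22 : v22 = 9 * lam ^ 2 / ((1 - lam) * (4 - lam) ^ 2))
    (h32 : v32 = 9 * lam ^ 2 * (19 + 3 * lam) / (2 * (18 - 7 * lam) * (1 - lam) * (4 - lam) ^ 2)) :
    8 * v32 - 65 * v22 + 57 * v20 > 0 :=
  bellman_strict_ineq1_1_general lam h0 h1 v20 v22 v32 h20 h22 h32
end

section
/- For λ ∈ (0,1), define v(i,0) for i ≥ 3 by v(3,0) = 3λ(19+3λ)/(2(4-λ)(1-λ)(18-7λ)) and v(i,0) = (2λ/(3-λ)) v(i-1,0) for i ≥ 4; define v(i,2) = (3λ/(4-λ)) v(i,0) for i ≥ 3. Then for all i ≥ 4: v(i,2) + 8·v(i-1,2) − 9·v(i,0) = 0. -/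
/-- Bellman indifference equation (eq1_2): with
`v(3,0) = 3λ(19+3λ)/(2(4-λ)(1-λ)(18-7λ))`, `v(i,0) = (2λ/(3-λ)) v(i-1,0)` for
`i ≥ 4`, and `v(i,2) = (3λ/(4-λ)) v(i,0)` for `i ≥ 3`, one has
`v(i,2) + 8 v(i-1,2) - 9 v(i,0) = 0` for all `i ≥ 4`. -/
theorem bellman_indifference_eq1_2
    (lam : ℝ) (h0 : 0 < lam) (h1 : lam < 1)
    (v0 v2 : ℕ → ℝ)
    (h30 : v0 3 = 3 * lam * (19 + 3 * lam) / (2 * (4 - lam) * (1 - lam) * (18 - 7 * lam)))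
    (hrec0 : ∀ i, 4 ≤ i → v0 i = (2 * lam / (3 - lam)) * v0 (i - 1))
    (hrec2 : ∀ i, 3 ≤ i → v2 i = (3 * lam / (4 - lam)) * v0 i) :
    ∀ i, 4 ≤ i → v2 i + 8 * v2 (i - 1) - 9 * v0 i = 0 := by
  intro i hi
  have h3 : (3:ℕ) ≤ i - 1 := by omega
  rw [hrec2 i (by omega), hrec2 (i-1) h3, hrec0 i hi]
  have h4 : (4:ℝ) - lam ≠ 0 := by nlinarith
  have h5 : (3:ℝ) - lam ≠ 0 := by nlinarith
  field_simp
  ring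
end

section
/- Let λ ∈ (0,1) and define f(λ) = 8·v(3,3) − 65·v(3,2) + 57·v(3,0) where v(3,0) = 3λ(19+3λ)/(2(4-λ)(1-λ)(18-7λ)), v(3,2) = 9λ²(19+3λ)/(2(18-7λ)(1-λ)(4-λ)²), v(3,3) = 9λ²(19+3λ)²/(4(18-7λ)²(4-λ)²(1-λ)). Then f(λ) > 0 for λ ∈ (15/17, 1). -/
/-- Strict Bellman inequality (ineq1_2) at `i = 3`:
`f(λ) = 8 v(3,3) - 65 v(3,2) + 57 v(3,0) > 0` for `λ ∈ (15/17, 1)`. -/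
theorem bellman_strict_ineq1_2_at_3
    (lam : ℝ) (hlo : 15 / 17 < lam) (hhi : lam < 1)
    (v30 v32 v33 : ℝ)
    (h30 : v30 = 3 * lam * (19 + 3 * lam) / (2 * (4 - lam) * (1 - lam) * (18 - 7 * lam)))
    (h32 : v32 = 9 * lam ^ 2 * (19 + 3 * lam) / (2 * (18 - 7 * lam) * (1 - lam) * (4 - lam) ^ 2))
    (h33 : v33 = 9 * lam ^ 2 * (19 + 3 * lam) ^ 2 / (4 * (18 - 7 * lam) ^ 2 * (4 - lam) ^ 2 * (1 - lam))) :
    8 * v33 - 65 * v32 + 57 * v30 > 0 := by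
  have hl : (0:ℝ) < lam := by linarith [show (0:ℝ) < 15/17 by norm_num]
  have h1 : (0:ℝ) < 1 - lam := by linarith
  have h4 : (0:ℝ) < 4 - lam := by linarith
  have h18 : (0:ℝ) < 18 - 7 * lam := by linarith
  have key : 8 * v33 - 65 * v32 + 57 * v30 =
      3 * lam * (19 + 3 * lam) * 144 * ((57 - 25 * lam) * (1 - lam)) /
        (4 * (18 - 7 * lam) ^ 2 * (4 - lam) ^ 2 * (1 - lam)) := by
    rw [h30, h32, h33]
    field_simp
    ring
  rw [key]
  apply div_pos
  · have : (0:ℝ) < 57 - 25 * lam := by linarith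
    positivity
  · positivity
end
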